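/- Let a₀, a₁₂₃ be real numbers with (a₀, a₁₂₃) ≠ (0, 0), and let Û be any bivector of Cl(3,0) with Û² = -1. Then for any integers c₁, c₂, exp( (1/2)·log(a₀² + a₁₂₃²) + 2πc₂·Û + (atan2(a₁₂₃, a₀) + 4πc₁)·I ) = a₀ + a₁₂₃·I. -/

import Mathlib

open Real CliffordAlgebra

noncomputable section

/-- The quadratic form of signature (3,0): `Q(x) = x₁² + x₂² + x₃²`. -/
def Q30 : QuadraticForm ℝ (Fin 3 → ℝ) := QuadraticMap.weightedSumSquares ℝ ![1, 1, 1]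

/-- The real Clifford algebra Cl(3,0). -/
abbrev Cl30 := CliffordAlgebra Q30

/-- The canonical (module) topology on the finite-dimensional real algebra Cl(3,0). -/
instance : TopologicalSpace Cl30 := moduleTopology ℝ Cl30

/-- The orthonormal generators `e₁, e₂, e₃` (indexed here by `0, 1, 2`). -/
def e (i : Fin 3) : Cl30 := ι Q30 (Pi.single i 1)

/-- The pseudoscalar `I = e₁e₂e₃`. -/
def I3 : Cl30 := e 0 * e 1 * e 2

/-- The exponential `exp M = ∑ₖ Mᵏ/k!` in Cl(3,0). -/
def expCl (M : Cl30) : Cl30 := ∑' n : ℕ, (n.factorial : ℝ)⁻¹ • M ^ n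

/-- `atan2 y x` is the argument in `(-π, π]` of the complex number `x + iy`. -/
def atan2 (y x : ℝ) : ℝ := Complex.arg ⟨x, y⟩

-- topology instances
instance : IsModuleTopology ℝ Cl30 := ⟨rfl⟩
instance : ContinuousAdd Cl30 := IsModuleTopology.toContinuousAdd ℝ Cl30
instance : IsTopologicalAddGroup Cl30 :=
  { continuous_neg := IsModuleTopology.continuous_neg ℝ Cl30 }

-- clifford basics
lemma e_mul_self (i : Fin 3) : e i * e i = 1 := by
  rw [e, ι_sq_scalar]
  have : Q30 (Pi.single i 1) = 1 := by
    fin_cases i <;>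
      simp [Q30, QuadraticMap.weightedSumSquares_apply, Fin.sum_univ_three, Pi.single_apply]
  rw [this, map_one]

lemma e_anti {i j : Fin 3} (h : i ≠ j) : e j * e i = -(e i * e j) := by
  have h2 : e i * e j + e j * e i = 0 := by
    rw [e, e, ι_mul_ι_add_swap]
    have : QuadraticMap.polar Q30 (Pi.single i 1) (Pi.single j 1) = 0 := by
      fin_cases i <;> fin_cases j <;> simp_all <;>
        simp [QuadraticMap.polar, Q30, QuadraticMap.weightedSumSquares_apply,
          Fin.sum_univ_three, Pi.single_apply] <;> ring
    rw [this, map_zero]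
  rw [eq_neg_iff_add_eq_zero, add_comm]; exact h2

lemma sq0' (x : Cl30) : e 0 * (e 0 * x) = x := by rw [← mul_assoc, e_mul_self, one_mul]
lemma sq1' (x : Cl30) : e 1 * (e 1 * x) = x := by rw [← mul_assoc, e_mul_self, one_mul]
lemma sq2' (x : Cl30) : e 2 * (e 2 * x) = x := by rw [← mul_assoc, e_mul_self, one_mul]
lemma sw10 : e 1 * e 0 = -(e 0 * e 1) := e_anti (by decide)
lemma sw20 : e 2 * e 0 = -(e 0 * e 2) := e_anti (by decide)
lemma sw21 : e 2 * e 1 = -(e 1 * e 2) := e_anti (by decide)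
lemma sw10' (x : Cl30) : e 1 * (e 0 * x) = -(e 0 * (e 1 * x)) := by
  rw [← mul_assoc, sw10, neg_mul, mul_assoc]
lemma sw20' (x : Cl30) : e 2 * (e 0 * x) = -(e 0 * (e 2 * x)) := by
  rw [← mul_assoc, sw20, neg_mul, mul_assoc]
lemma sw21' (x : Cl30) : e 2 * (e 1 * x) = -(e 1 * (e 2 * x)) := by
  rw [← mul_assoc, sw21, neg_mul, mul_assoc]

lemma I3_sq : I3 * I3 = -1 := by
  simp only [I3, mul_assoc, mul_neg, neg_mul, neg_neg, sq0', sq1', sq2',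
    sw10', sw20', sw21', sw10, sw20, sw21, e_mul_self, mul_one, one_mul]

lemma I3_comm (i : Fin 3) : e i * I3 = I3 * e i := by
  have h0 : e 0 * I3 = I3 * e 0 := by
    simp only [I3, mul_assoc, mul_neg, neg_mul, neg_neg, sq0', sq1', sq2',
      sw10', sw20', sw21', sw10, sw20, sw21, e_mul_self, mul_one, one_mul]
  have h1 : e 1 * I3 = I3 * e 1 := by
    simp only [I3, mul_assoc, mul_neg, neg_mul, neg_neg, sq0', sq1', sq2',
      sw10', sw20', sw21', sw10, sw20, sw21, e_mul_self, mul_one, one_mul]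
  have h2 : e 2 * I3 = I3 * e 2 := by
    simp only [I3, mul_assoc, mul_neg, neg_mul, neg_neg, sq0', sq1', sq2',
      sw10', sw20', sw21', sw10, sw20, sw21, e_mul_self, mul_one, one_mul]
  fin_cases i <;> assumption

def gens : Set Cl30 :=
  {1, e 0, e 1, e 2, e 0 * e 1, e 0 * e 2, e 1 * e 2, e 0 * (e 1 * e 2)}

lemma gens_span_top : Submodule.span ℝ gens = ⊤ := by
  set S := Submodule.span ℝ gens with hS
  have hg : ∀ g ∈ gens, g ∈ S := fun g hg => Submodule.subset_span hg
  have hgm1 : (1 : Cl30) ∈ gens := Set.mem_insert _ _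
  have hgm2 : e 0 ∈ gens := Set.mem_insert_of_mem _ (Set.mem_insert _ _)
  have hgm3 : e 1 ∈ gens := Set.mem_insert_of_mem _ (Set.mem_insert_of_mem _ (Set.mem_insert _ _))
  have hgm4 : e 2 ∈ gens := Set.mem_insert_of_mem _ (Set.mem_insert_of_mem _
    (Set.mem_insert_of_mem _ (Set.mem_insert _ _)))
  have hgm5 : e 0 * e 1 ∈ gens := Set.mem_insert_of_mem _ (Set.mem_insert_of_mem _
    (Set.mem_insert_of_mem _ (Set.mem_insert_of_mem _ (Set.mem_insert _ _))))
  have hgm6 : e 0 * e 2 ∈ gens := Set.mem_insert_of_mem _ (Set.mem_insert_of_mem _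
    (Set.mem_insert_of_mem _ (Set.mem_insert_of_mem _ (Set.mem_insert_of_mem _
    (Set.mem_insert _ _)))))
  have hgm7 : e 1 * e 2 ∈ gens := Set.mem_insert_of_mem _ (Set.mem_insert_of_mem _
    (Set.mem_insert_of_mem _ (Set.mem_insert_of_mem _ (Set.mem_insert_of_mem _
    (Set.mem_insert_of_mem _ (Set.mem_insert _ _))))))
  have hgm8 : e 0 * (e 1 * e 2) ∈ gens := Set.mem_insert_of_mem _ (Set.mem_insert_of_mem _
    (Set.mem_insert_of_mem _ (Set.mem_insert_of_mem _ (Set.mem_insert_of_mem _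
    (Set.mem_insert_of_mem _ (Set.mem_insert_of_mem _ rfl))))))
  have m1 := hg _ hgm1
  have m2 := hg _ hgm2
  have m3 := hg _ hgm3
  have m4 := hg _ hgm4
  have m5 := hg _ hgm5
  have m6 := hg _ hgm6
  have m7 := hg _ hgm7
  have m8 := hg _ hgm8
  have hcase : ∀ g ∈ gens, ∀ x : Cl30, x ∈ S → g = x →
      ∀ i : Fin 3, False → True := fun _ _ _ _ _ _ _ => trivial
  have key : ∀ a : Cl30, (∀ g ∈ gens, a * g ∈ S) → ∀ y ∈ S, a * y ∈ S := by
    intro a ha y hy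
    induction hy using Submodule.span_induction with
    | mem x hx => exact ha x hx
    | zero => simpa using S.zero_mem
    | add u v _ _ hu hv => rw [mul_add]; exact S.add_mem hu hv
    | smul r u _ hu => rw [mul_smul_comm]; exact S.smul_mem r hu
  have hB : ∀ g ∈ gens, ∀ x ∈ S, -x ∈ S := fun _ _ x hx => S.neg_mem hx
  have he0 : ∀ y ∈ S, e 0 * y ∈ S := by
    refine key _ ?_
    intro g hgm
    simp only [gens, Set.mem_insert_iff, Set.mem_singleton_iff] at hgm
    rcases hgm with h|h|h|h|h|h|h|h <;> subst h <;>
      (try simp only [mul_one, sq0', sq1', sq2', sw10', sw20', sw21', sw10, sw20, sw21,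
        e_mul_self, mul_neg, neg_neg, one_mul]) <;>
      first
        | assumption
        | exact S.neg_mem (by assumption)
        | (rw [← mul_assoc]; assumption)
        | exact S.neg_mem (by rw [← mul_assoc]; assumption)
  have he1 : ∀ y ∈ S, e 1 * y ∈ S := by
    refine key _ ?_
    intro g hgm
    simp only [gens, Set.mem_insert_iff, Set.mem_singleton_iff] at hgm
    rcases hgm with h|h|h|h|h|h|h|h <;> subst h <;>
      (try simp only [mul_one, sq0', sq1', sq2', sw10', sw20', sw21', sw10, sw20, sw21,
        e_mul_self, mul_neg, neg_neg, one_mul]) <;>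
      first
        | assumption
        | exact S.neg_mem (by assumption)
        | (rw [← mul_assoc]; assumption)
        | exact S.neg_mem (by rw [← mul_assoc]; assumption)
  have he2 : ∀ y ∈ S, e 2 * y ∈ S := by
    refine key _ ?_
    intro g hgm
    simp only [gens, Set.mem_insert_iff, Set.mem_singleton_iff] at hgm
    rcases hgm with h|h|h|h|h|h|h|h <;> subst h <;>
      (try simp only [mul_one, sq0', sq1', sq2', sw10', sw20', sw21', sw10, sw20, sw21,
        e_mul_self, mul_neg, neg_neg, one_mul]) <;>
      first
        | assumption
        | exact S.neg_mem (by assumption)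
        | (rw [← mul_assoc]; assumption)
        | exact S.neg_mem (by rw [← mul_assoc]; assumption)
  have hei : ∀ (i : Fin 3), ∀ y ∈ S, e i * y ∈ S := by
    intro i; fin_cases i <;> assumption
  have hT : ∀ x : Cl30, ∀ y ∈ S, x * y ∈ S := by
    intro x
    induction x using CliffordAlgebra.induction with
    | algebraMap r =>
      intro y hy
      rw [Algebra.algebraMap_eq_smul_one, smul_mul_assoc, one_mul]
      exact S.smul_mem r hy
    | ι m =>
      intro y hy
      have hmeq : m = m 0 • (Pi.single 0 1 : Fin 3 → ℝ) + m 1 • (Pi.single 1 1 : Fin 3 → ℝ)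
          + m 2 • (Pi.single 2 1 : Fin 3 → ℝ) := by
        funext j; fin_cases j <;> simp [Pi.single_apply]
      have hm : ι Q30 m = m 0 • e 0 + m 1 • e 1 + m 2 • e 2 := by
        conv_lhs => rw [hmeq]
        simp [e]
      rw [hm, add_mul, add_mul, smul_mul_assoc, smul_mul_assoc, smul_mul_assoc]
      exact S.add_mem (S.add_mem (S.smul_mem _ (he0 y hy)) (S.smul_mem _ (he1 y hy)))
        (S.smul_mem _ (he2 y hy))
    | mul a b ha hb => intro y hy; rw [mul_assoc]; exact ha _ (hb _ hy)
    | add a b ha hb => intro y hy; rw [add_mul]; exact S.add_mem (ha _ hy) (hb _ hy)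
  rw [eq_top_iff]
  intro x _
  simpa using hT x 1 m1

lemma gens_finite : gens.Finite := by
  unfold gens
  repeat apply Set.Finite.insert
  exact Set.finite_singleton _

instance : Module.Finite ℝ Cl30 := by
  rw [Module.finite_def, Submodule.fg_def]
  exact ⟨gens, gens_finite, gens_span_top⟩


instance : T2Space Cl30 := by
  let b := Module.Basis.ofVectorSpace ℝ Cl30
  let φ := b.equivFun
  have hcont : Continuous φ := IsModuleTopology.continuous_of_linearMap φ.toLinearMap
  have hcont2 : Continuous φ.symm := φ.symm.toLinearMap.continuous_of_finiteDimensional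
  let h : Cl30 ≃ₜ (Module.Basis.ofVectorSpaceIndex ℝ Cl30 → ℝ) :=
    { toEquiv := φ.toEquiv, continuous_toFun := hcont, continuous_invFun := hcont2 }
  exact h.isEmbedding.t2Space

/-- exponential of the logarithm of an element `a₀ + a₁₂₃ I` of the
center of Cl(3,0). -/
theorem exp_log_center_Cl30
    (a0 a123 d12 d13 d23 : ℝ) (c1 c2 : ℤ) (U : Cl30)
    (hne : ¬(a0 = 0 ∧ a123 = 0))
    (hU : U = d12 • (e 0 * e 1) + d13 • (e 0 * e 2) + d23 • (e 1 * e 2))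
    (hU2 : U * U = -1) :
    expCl (algebraMap ℝ Cl30 ((1 / 2) * Real.log (a0 ^ 2 + a123 ^ 2)) +
      (2 * π * c2) • U + (atan2 a123 a0 + 4 * π * c1) • I3) =
      algebraMap ℝ Cl30 a0 + a123 • I3 := by
  -- notation
  set s : ℝ := (1 / 2) * Real.log (a0 ^ 2 + a123 ^ 2) with hs
  set θ : ℝ := atan2 a123 a0 + 4 * π * c1 with hθ
  set β : ℝ := 2 * π * c2 with hβ
  -- commutation of I3 with U
  have hIU : I3 * U = U * I3 := by
    have h0 := I3_comm 0; have h1 := I3_comm 1; have h2 := I3_comm 2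
    rw [hU]
    simp only [mul_add, add_mul, mul_smul_comm, smul_mul_assoc]
    rw [show I3 * (e 0 * e 1) = e 0 * e 1 * I3 by
        rw [← mul_assoc, ← h0, mul_assoc, ← h1, ← mul_assoc],
      show I3 * (e 0 * e 2) = e 0 * e 2 * I3 by
        rw [← mul_assoc, ← h0, mul_assoc, ← h2, ← mul_assoc],
      show I3 * (e 1 * e 2) = e 1 * e 2 * I3 by
        rw [← mul_assoc, ← h1, mul_assoc, ← h2, ← mul_assoc]]
  -- the commuting idempotent decomposition
  set J : Cl30 := U * I3 with hJ
  have hJ2 : J * J = 1 := by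
    rw [hJ, mul_assoc, ← mul_assoc I3 U I3, hIU, mul_assoc, I3_sq, ← mul_assoc, hU2]
    simp
  have hIJ : I3 * J = -U := by
    rw [hJ, ← mul_assoc, hIU, mul_assoc, I3_sq]
    simp
  have hJI : J * I3 = -U := by
    rw [hJ, mul_assoc, I3_sq]
    simp
  set P : Cl30 := (1/2 : ℝ) • (1 + J) with hP
  set Q : Cl30 := (1/2 : ℝ) • (1 - J) with hQdef
  -- relations
  have hPP : P * P = P := by
    rw [hP]
    simp only [smul_mul_assoc, mul_smul_comm, smul_smul, mul_add, add_mul, one_mul, mul_one, hJ2]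
    match_scalars <;> ring
  have hQQ : Q * Q = Q := by
    rw [hQdef]
    simp only [smul_mul_assoc, mul_smul_comm, smul_smul, sub_mul, mul_sub, one_mul, mul_one, hJ2]
    match_scalars <;> ring
  have hPQ : P * Q = 0 := by
    rw [hP, hQdef]
    simp only [smul_mul_assoc, mul_smul_comm, smul_smul, sub_mul, mul_sub, mul_add, add_mul,
      one_mul, mul_one, hJ2]
    match_scalars <;> ring
  have hQP : Q * P = 0 := by
    rw [hP, hQdef]
    simp only [smul_mul_assoc, mul_smul_comm, smul_smul, sub_mul, mul_sub, mul_add, add_mul,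
      one_mul, mul_one, hJ2]
    match_scalars <;> ring
  have hIJcomm : I3 * J = J * I3 := by rw [hIJ, hJI]
  have hPI : P * I3 = I3 * P := by
    rw [hP]
    simp only [smul_mul_assoc, mul_smul_comm, add_mul, mul_add, one_mul, mul_one, hIJcomm]
  have hQI : Q * I3 = I3 * Q := by
    rw [hQdef]
    simp only [smul_mul_assoc, mul_smul_comm, sub_mul, mul_sub, one_mul, mul_one, hIJcomm]
  -- assoc-normalized product rules for atoms P, Q, I3
  have rPP : ∀ x : Cl30, P * (P * x) = P * x := fun x => by rw [← mul_assoc, hPP]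
  have rQQ : ∀ x : Cl30, Q * (Q * x) = Q * x := fun x => by rw [← mul_assoc, hQQ]
  have rPQ : ∀ x : Cl30, P * (Q * x) = 0 := fun x => by rw [← mul_assoc, hPQ, zero_mul]
  have rQP : ∀ x : Cl30, Q * (P * x) = 0 := fun x => by rw [← mul_assoc, hQP, zero_mul]
  have rPI : ∀ x : Cl30, P * (I3 * x) = I3 * (P * x) := fun x => by
    rw [← mul_assoc, hPI, mul_assoc]
  have rQI : ∀ x : Cl30, Q * (I3 * x) = I3 * (Q * x) := fun x => by
    rw [← mul_assoc, hQI, mul_assoc]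
  have rII : ∀ x : Cl30, I3 * (I3 * x) = -x := fun x => by
    rw [← mul_assoc, I3_sq, neg_one_mul]
  -- the map φ
  let φ : ℂ × ℂ →ₗ[ℝ] Cl30 :=
    { toFun := fun z => z.1.re • P + z.1.im • (I3 * P) + z.2.re • Q + z.2.im • (I3 * Q)
      map_add' := by
        intro z w
        simp only [Prod.fst_add, Prod.snd_add, Complex.add_re, Complex.add_im]
        module
      map_smul' := by
        intro r z
        simp only [Prod.smul_fst, Prod.smul_snd, Complex.smul_re, Complex.smul_im,
          RingHom.id_apply, smul_eq_mul]
        module }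
  have hφ : ∀ z : ℂ × ℂ, φ z
      = z.1.re • P + z.1.im • (I3 * P) + z.2.re • Q + z.2.im • (I3 * Q) := fun z => rfl
  have hφmul : ∀ z w : ℂ × ℂ, φ (z * w) = φ z * φ w := by
    intro z w
    rw [hφ, hφ, hφ]
    simp only [Prod.fst_mul, Prod.snd_mul, Complex.mul_re, Complex.mul_im]
    simp only [mul_add, add_mul, smul_mul_assoc, mul_smul_comm, smul_smul, mul_assoc,
      rPP, rQQ, rPQ, rQP, rPI, rQI, rII, hPP, hQQ, hPQ, hQP,
      mul_zero, smul_zero, zero_add, add_zero, mul_one, mul_neg, smul_neg]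
    match_scalars <;> ring
  have hφone : φ 1 = 1 := by
    rw [hφ]
    show (1:ℝ) • P + (0:ℝ) • (I3 * P) + (1:ℝ) • Q + (0:ℝ) • (I3 * Q) = 1
    rw [hP, hQdef]
    match_scalars <;> ring
  have hφpow : ∀ (z : ℂ × ℂ) (n : ℕ), φ (z ^ n) = (φ z) ^ n := by
    intro z n
    induction n with
    | zero => simpa using hφone
    | succ n ih => rw [pow_succ, pow_succ, hφmul, ih]
  -- continuity of φ
  have hφcont : Continuous φ := φ.continuous_of_finiteDimensional
  -- exp commutes with φ
  have hφexp : ∀ z : ℂ × ℂ, expCl (φ z) = φ (NormedSpace.exp z) := by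
    intro z
    have h1 : HasSum (fun n : ℕ => (n.factorial : ℝ)⁻¹ • z ^ n) (NormedSpace.exp z) := by
      have := NormedSpace.expSeries_hasSum_exp (𝕂 := ℝ) z
      simpa only [NormedSpace.expSeries_apply_eq] using this
    have h2 : HasSum (fun n : ℕ => (n.factorial : ℝ)⁻¹ • (φ z) ^ n) (φ (NormedSpace.exp z)) := by
      have := h1.map φ.toAddMonoidHom hφcont
      simpa only [Function.comp_def, LinearMap.toAddMonoidHom_coe, map_smul, hφpow] using this
    exact h2.tsum_eq
  have hI3P : I3 * P = (1/2 : ℝ) • (I3 - U) := by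
    rw [hP, mul_smul_comm, mul_add, mul_one, hIJ, ← sub_eq_add_neg]
  have hI3Q : I3 * Q = (1/2 : ℝ) • (I3 + U) := by
    rw [hQdef, mul_smul_comm, mul_sub, mul_one, hIJ, sub_neg_eq_add]
  -- the element M as φ of a pair of complex numbers
  have hM : algebraMap ℝ Cl30 s + β • U + θ • I3 = φ (⟨s, θ - β⟩, ⟨s, θ + β⟩) := by
    rw [hφ]
    show algebraMap ℝ Cl30 s + β • U + θ • I3
      = s • P + (θ - β) • (I3 * P) + s • Q + (θ + β) • (I3 * Q)
    rw [Algebra.algebraMap_eq_smul_one, hI3P, hI3Q, hP, hQdef]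
    module
  -- compute the complex exponentials
  have hr2 : (0:ℝ) < a0 ^ 2 + a123 ^ 2 := by
    rcases not_and_or.mp hne with h | h
    · have h1 : 0 < a0 ^ 2 := (sq_nonneg a0).lt_of_ne' (pow_ne_zero 2 h)
      nlinarith [sq_nonneg a123]
    · have h1 : 0 < a123 ^ 2 := (sq_nonneg a123).lt_of_ne' (pow_ne_zero 2 h)
      nlinarith [sq_nonneg a0]
  have hsqrt : Real.sqrt (a0 ^ 2 + a123 ^ 2) ≠ 0 := by positivity
  have hexps : Real.exp s = Real.sqrt (a0 ^ 2 + a123 ^ 2) := by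
    rw [hs, show (1/2) * Real.log (a0 ^ 2 + a123 ^ 2)
        = Real.log (Real.sqrt (a0 ^ 2 + a123 ^ 2)) by rw [Real.log_sqrt hr2.le]; ring,
      Real.exp_log (Real.sqrt_pos.mpr hr2)]
  have hzne : (⟨a0, a123⟩ : ℂ) ≠ 0 := by
    intro h
    rw [Complex.ext_iff] at h
    exact hne ⟨h.1, h.2⟩
  have habs : ‖(⟨a0, a123⟩ : ℂ)‖ = Real.sqrt (a0 ^ 2 + a123 ^ 2) := by
    rw [Complex.norm_def, Complex.normSq_mk]
    ring_nf
  have hcos : ∀ m : ℤ, Real.cos (atan2 a123 a0 + m * (2 * π))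
      = a0 / Real.sqrt (a0 ^ 2 + a123 ^ 2) := by
    intro m
    rw [Real.cos_add_int_mul_two_pi, atan2, Complex.cos_arg hzne, habs]
  have hsin : ∀ m : ℤ, Real.sin (atan2 a123 a0 + m * (2 * π))
      = a123 / Real.sqrt (a0 ^ 2 + a123 ^ 2) := by
    intro m
    rw [Real.sin_add_int_mul_two_pi, atan2, Complex.sin_arg, habs]
  have hexp1 : Complex.exp ⟨s, θ - β⟩ = ⟨a0, a123⟩ := by
    have ht : θ - β = atan2 a123 a0 + ((2 * c1 - c2 : ℤ) : ℝ) * (2 * π) := by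
      rw [hθ, hβ]; push_cast; ring
    rw [Complex.ext_iff]
    constructor
    · rw [Complex.exp_re]
      show Real.exp s * Real.cos (θ - β) = a0
      rw [ht, hcos, hexps]
      field_simp
    · rw [Complex.exp_im]
      show Real.exp s * Real.sin (θ - β) = a123
      rw [ht, hsin, hexps]
      field_simp
  have hexp2 : Complex.exp ⟨s, θ + β⟩ = ⟨a0, a123⟩ := by
    have ht : θ + β = atan2 a123 a0 + ((2 * c1 + c2 : ℤ) : ℝ) * (2 * π) := by
      rw [hθ, hβ]; push_cast; ring
    rw [Complex.ext_iff]
    constructor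
    · rw [Complex.exp_re]
      show Real.exp s * Real.cos (θ + β) = a0
      rw [ht, hcos, hexps]
      field_simp
    · rw [Complex.exp_im]
      show Real.exp s * Real.sin (θ + β) = a123
      rw [ht, hsin, hexps]
      field_simp
  have hexpPair : NormedSpace.exp ((⟨s, θ - β⟩, ⟨s, θ + β⟩) : ℂ × ℂ)
      = ((⟨a0, a123⟩ : ℂ), (⟨a0, a123⟩ : ℂ)) := by
    have hfst := Prod.fst_exp ((⟨s, θ - β⟩, ⟨s, θ + β⟩) : ℂ × ℂ)
    have hsnd := Prod.snd_exp ((⟨s, θ - β⟩, ⟨s, θ + β⟩) : ℂ × ℂ)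
    have heq : (NormedSpace.exp : ℂ → ℂ) = Complex.exp := by
      rw [Complex.exp_eq_exp_ℂ]
    ext
    · rw [hfst]; show NormedSpace.exp (⟨s, θ - β⟩ : ℂ) = _; rw [heq, hexp1]
    · rw [hsnd]; show NormedSpace.exp (⟨s, θ + β⟩ : ℂ) = _; rw [heq, hexp2]
  -- final computation
  calc expCl (algebraMap ℝ Cl30 s + β • U + θ • I3)
      = expCl (φ (⟨s, θ - β⟩, ⟨s, θ + β⟩)) := by rw [hM]
    _ = φ ((⟨a0, a123⟩ : ℂ), (⟨a0, a123⟩ : ℂ)) := by rw [hφexp, hexpPair]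
    _ = algebraMap ℝ Cl30 a0 + a123 • I3 := by
        rw [hφ]
        show a0 • P + a123 • (I3 * P) + a0 • Q + a123 • (I3 * Q)
          = algebraMap ℝ Cl30 a0 + a123 • I3
        rw [Algebra.algebraMap_eq_smul_one, hI3P, hI3Q, hP, hQdef]
        module
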